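/- One-shot deviation principle for stationary equilibria: in a finite discounted stochastic game, a joint stationary policy π is a stationary mixed-strategy Nash equilibrium (i.e., V^i(π; s) ≥ V^i((π'_i, π_{-i}); s) for all states s, agents i, and stationary mixed policies π'_i) if and only if for every state s, every agent i, and every probability distribution σ ∈ PMF(A_i), E_{a_i ∼ σ, a_{-i} ∼ π_{-i}(s)}[ r_i(s, a) + γ ∑_{s'} T(s,a)(s') V^i(π; s') ] ≤ V^i(π; s). -/
import Mathlib
set_option linter.unusedSectionVars false
set_option linter.unusedVariables false
set_option maxHeartbeats 1000000


open scoped BigOperators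

noncomputable section

variable {N : ℕ} {S : Type} [Fintype S] {A : Fin N → Type} [∀ i, Fintype (A i)]

/-- Expectation of `g` over the joint action distribution induced by the
joint stationary policy `π` at state `s` (agents sample independently). -/
def jointExp (π : ∀ i, S → PMF (A i)) (s : S) (g : (∀ i, A i) → ℝ) : ℝ :=
  ∑ a : ∀ i, A i, (∏ i, ((π i s) (a i)).toReal) * g a

/-- Expected immediate reward under joint policy `π`. -/
def expReward (r : S → (∀ i, A i) → ℝ) (π : ∀ i, S → PMF (A i)) : S → ℝ :=
  fun s => jointExp π s (r s)

/-- One-step expected transition operator under joint policy `π`. -/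
def stepOp (T : S → (∀ i, A i) → PMF S) (π : ∀ i, S → PMF (A i)) (f : S → ℝ) : S → ℝ :=
  fun s => jointExp π s (fun a => ∑ s' : S, ((T s a) s').toReal * f s')

/-- Discounted value `V(π; s) = ∑ₜ γ^t E[r(s_t, a_t) | s₀ = s]` of the agent with
reward function `r`, under the joint stationary policy `π`. -/
def value (T : S → (∀ i, A i) → PMF S) (r : S → (∀ i, A i) → ℝ) (γ : ℝ)
    (π : ∀ i, S → PMF (A i)) (s : S) : ℝ :=
  ∑' t : ℕ, γ ^ t * ((stepOp T π)^[t] (expReward r π)) s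

lemma pmfSum {α : Type*} [Fintype α] (p : PMF α) : ∑ x, (p x).toReal = 1 := by
  have h := p.tsum_coe
  rw [tsum_fintype] at h
  rw [← ENNReal.toReal_sum (fun a _ => p.apply_ne_top a), h, ENNReal.toReal_one]

lemma weight_nonneg (π : ∀ i, S → PMF (A i)) (s : S) (a : ∀ i, A i) :
    0 ≤ ∏ i, ((π i s) (a i)).toReal :=
  Finset.prod_nonneg fun _ _ => ENNReal.toReal_nonneg

lemma weight_sum (π : ∀ i, S → PMF (A i)) (s : S) :
    ∑ a : ∀ i, A i, ∏ i, ((π i s) (a i)).toReal = 1 := by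
  classical
  rw [← Fintype.piFinset_univ,
    ← Finset.prod_univ_sum (fun _ => Finset.univ) (fun i j => ((π i s) j).toReal)]
  simp [pmfSum]

lemma jointExp_le_of_le {π : ∀ i, S → PMF (A i)} {s : S} {g : (∀ i, A i) → ℝ} {c : ℝ}
    (hg : ∀ a, g a ≤ c) : jointExp π s g ≤ c := by
  unfold jointExp
  calc ∑ a : ∀ i, A i, (∏ i, ((π i s) (a i)).toReal) * g a
      ≤ ∑ a : ∀ i, A i, (∏ i, ((π i s) (a i)).toReal) * c :=
        Finset.sum_le_sum fun a _ => mul_le_mul_of_nonneg_left (hg a) (weight_nonneg π s a)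
    _ = (∑ a : ∀ i, A i, ∏ i, ((π i s) (a i)).toReal) * c := by rw [Finset.sum_mul]
    _ = c := by rw [weight_sum, one_mul]

lemma le_jointExp_of_le {π : ∀ i, S → PMF (A i)} {s : S} {g : (∀ i, A i) → ℝ} {c : ℝ}
    (hg : ∀ a, c ≤ g a) : c ≤ jointExp π s g := by
  unfold jointExp
  calc c = (∑ a : ∀ i, A i, ∏ i, ((π i s) (a i)).toReal) * c := by rw [weight_sum, one_mul]
    _ = ∑ a : ∀ i, A i, (∏ i, ((π i s) (a i)).toReal) * c := by rw [Finset.sum_mul]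
    _ ≤ _ := Finset.sum_le_sum fun a _ => mul_le_mul_of_nonneg_left (hg a) (weight_nonneg π s a)

lemma pmfExp_le {α : Type*} [Fintype α] (p : PMF α) {f : α → ℝ} {c : ℝ}
    (h : ∀ x, f x ≤ c) : ∑ x, (p x).toReal * f x ≤ c := by
  calc ∑ x, (p x).toReal * f x ≤ ∑ x, (p x).toReal * c :=
        Finset.sum_le_sum fun x _ => mul_le_mul_of_nonneg_left (h x) ENNReal.toReal_nonneg
    _ = (∑ x, (p x).toReal) * c := by rw [Finset.sum_mul]
    _ = c := by rw [pmfSum, one_mul]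

lemma le_pmfExp {α : Type*} [Fintype α] (p : PMF α) {f : α → ℝ} {c : ℝ}
    (h : ∀ x, c ≤ f x) : c ≤ ∑ x, (p x).toReal * f x := by
  calc c = (∑ x, (p x).toReal) * c := by rw [pmfSum, one_mul]
    _ = ∑ x, (p x).toReal * c := by rw [Finset.sum_mul]
    _ ≤ _ := Finset.sum_le_sum fun x _ => mul_le_mul_of_nonneg_left (h x) ENNReal.toReal_nonneg

lemma stepOp_le_of_le {T : S → (∀ i, A i) → PMF S} {π : ∀ i, S → PMF (A i)} {f : S → ℝ} {c : ℝ}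
    (h : ∀ s', f s' ≤ c) (s : S) : stepOp T π f s ≤ c :=
  jointExp_le_of_le fun a => pmfExp_le _ h

lemma le_stepOp_of_le {T : S → (∀ i, A i) → PMF S} {π : ∀ i, S → PMF (A i)} {f : S → ℝ} {c : ℝ}
    (h : ∀ s', c ≤ f s') (s : S) : c ≤ stepOp T π f s :=
  le_jointExp_of_le fun a => le_pmfExp _ h

lemma abs_stepOp_le {T : S → (∀ i, A i) → PMF S} {π : ∀ i, S → PMF (A i)} {f : S → ℝ} {c : ℝ}
    (h : ∀ s', |f s'| ≤ c) (s : S) : |stepOp T π f s| ≤ c :=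
  abs_le.2 ⟨le_stepOp_of_le (fun s' => (abs_le.1 (h s')).1) s,
    stepOp_le_of_le (fun s' => (abs_le.1 (h s')).2) s⟩

lemma abs_iter_le (T : S → (∀ i, A i) → PMF S) (π : ∀ i, S → PMF (A i)) (f : S → ℝ) {C : ℝ}
    (hC : ∀ s, |f s| ≤ C) : ∀ t s, |((stepOp T π)^[t] f) s| ≤ C := by
  intro t
  induction t with
  | zero => simpa using hC
  | succ n ih =>
    intro s
    rw [Function.iterate_succ_apply']
    exact abs_stepOp_le ih s

lemma summable_iter (T : S → (∀ i, A i) → PMF S) (π : ∀ i, S → PMF (A i)) (f : S → ℝ)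
    {γ : ℝ} (hγ0 : 0 ≤ γ) (hγ1 : γ < 1) (s : S) :
    Summable fun t => γ ^ t * ((stepOp T π)^[t] f) s := by
  set C := ∑ s' : S, |f s'| with hCdef
  have hC : ∀ s', |f s'| ≤ C := fun s' =>
    Finset.single_le_sum (fun x _ => abs_nonneg (f x)) (Finset.mem_univ s')
  apply Summable.of_abs
  apply Summable.of_nonneg_of_le (fun t => abs_nonneg _) (fun t => ?_)
    (((summable_geometric_of_lt_one hγ0 hγ1).mul_right C))
  rw [abs_mul, abs_pow, abs_of_nonneg hγ0]
  exact mul_le_mul_of_nonneg_left (abs_iter_le T π f hC t s) (by positivity)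


lemma stepOp_smul (T : S → (∀ i, A i) → PMF S) (π : ∀ i, S → PMF (A i)) (c : ℝ) (f : S → ℝ)
    (s : S) : stepOp T π (fun s' => c * f s') s = c * stepOp T π f s := by
  unfold stepOp jointExp
  dsimp only
  rw [Finset.mul_sum]
  refine Finset.sum_congr rfl fun a _ => ?_
  have h : ∑ s' : S, ((T s a) s').toReal * (c * f s') = c * ∑ s' : S, ((T s a) s').toReal * f s' := by
    rw [Finset.mul_sum]
    exact Finset.sum_congr rfl fun s' _ => by ring
  rw [h]
  ring

lemma stepOp_sub (T : S → (∀ i, A i) → PMF S) (π : ∀ i, S → PMF (A i)) (f g : S → ℝ)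
    (s : S) : stepOp T π (fun s' => f s' - g s') s = stepOp T π f s - stepOp T π g s := by
  unfold stepOp jointExp
  dsimp only
  rw [← Finset.sum_sub_distrib]
  refine Finset.sum_congr rfl fun a _ => ?_
  rw [← mul_sub, ← Finset.sum_sub_distrib]
  congr 1
  exact Finset.sum_congr rfl fun s' _ => by ring

lemma jointExp_add_mul (π : ∀ i, S → PMF (A i)) (s : S) (g h : (∀ i, A i) → ℝ) (c : ℝ) :
    jointExp π s (fun a => g a + c * h a) = jointExp π s g + c * jointExp π s h := by
  simp only [jointExp, mul_add, Finset.sum_add_distrib, Finset.mul_sum]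
  congr 1
  exact Finset.sum_congr rfl fun a _ => by ring

lemma stepOp_tsum (T : S → (∀ i, A i) → PMF S) (π : ∀ i, S → PMF (A i)) (F : ℕ → S → ℝ)
    (hF : ∀ s', Summable fun t => F t s') (s : S) :
    stepOp T π (fun s' => ∑' t, F t s') s = ∑' t, stepOp T π (F t) s := by
  simp only [stepOp, jointExp]
  have h1 : ∀ (a : ∀ i, A i), ∑ s' : S, ((T s a) s').toReal * ∑' t, F t s'
      = ∑' t, ∑ s' : S, ((T s a) s').toReal * F t s' := by
    intro a
    calc ∑ s' : S, ((T s a) s').toReal * ∑' t, F t s'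
        = ∑ s' : S, ∑' t, ((T s a) s').toReal * F t s' :=
          Finset.sum_congr rfl fun s' _ => tsum_mul_left.symm
      _ = ∑' t, ∑ s' : S, ((T s a) s').toReal * F t s' :=
          (Summable.tsum_finsetSum (fun s' _ => (hF s').mul_left _)).symm
  simp only [h1]
  have h2 : ∀ (a : ∀ i, A i), Summable fun t => ∑ s' : S, ((T s a) s').toReal * F t s' :=
    fun a => summable_sum (fun s' _ => (hF s').mul_left _)
  calc ∑ a : ∀ i, A i, (∏ i, ((π i s) (a i)).toReal) * ∑' t, ∑ s' : S, ((T s a) s').toReal * F t s'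
      = ∑ a : ∀ i, A i, ∑' t, (∏ i, ((π i s) (a i)).toReal) * ∑ s' : S, ((T s a) s').toReal * F t s' :=
        Finset.sum_congr rfl fun a _ => tsum_mul_left.symm
    _ = ∑' t, ∑ a : ∀ i, A i, (∏ i, ((π i s) (a i)).toReal) * ∑ s' : S, ((T s a) s').toReal * F t s' :=
        (Summable.tsum_finsetSum (fun a _ => (h2 a).mul_left _)).symm

lemma bellman (T : S → (∀ i, A i) → PMF S) (r : S → (∀ i, A i) → ℝ) {γ : ℝ}
    (hγ0 : 0 ≤ γ) (hγ1 : γ < 1) (π : ∀ i, S → PMF (A i)) (s : S) :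
    value T r γ π s = expReward r π s + γ * stepOp T π (value T r γ π) s := by
  have hs : ∀ s', Summable fun t => γ ^ t * ((stepOp T π)^[t] (expReward r π)) s' :=
    summable_iter T π _ hγ0 hγ1
  have hrhs : stepOp T π (value T r γ π) s
      = ∑' t, γ ^ t * stepOp T π ((stepOp T π)^[t] (expReward r π)) s := by
    have := stepOp_tsum T π (fun t s' => γ ^ t * ((stepOp T π)^[t] (expReward r π)) s') hs s
    rw [show value T r γ π = fun s' => ∑' t, γ ^ t * ((stepOp T π)^[t] (expReward r π)) s'
      from rfl, this]
    exact tsum_congr fun t => stepOp_smul T π _ _ s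
  rw [show value T r γ π s = ∑' t, γ ^ t * ((stepOp T π)^[t] (expReward r π)) s from rfl,
    Summable.tsum_eq_zero_add (hs s), hrhs, ← tsum_mul_left]
  simp only [pow_zero, one_mul, Function.iterate_zero_apply]
  congr 1
  exact tsum_congr fun t => by
    rw [Function.iterate_succ_apply']; ring

lemma value_le_of_step_le (T : S → (∀ i, A i) → PMF S) (r : S → (∀ i, A i) → ℝ) {γ : ℝ}
    (hγ0 : 0 ≤ γ) (hγ1 : γ < 1) (π : ∀ i, S → PMF (A i)) (f : S → ℝ)
    (hf : ∀ s, expReward r π s + γ * stepOp T π f s ≤ f s) :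
    ∀ s, value T r γ π s ≤ f s := by
  cases isEmpty_or_nonempty S with
  | inl h => intro s; exact isEmptyElim s
  | inr h =>
    set d := fun s => value T r γ π s - f s with hd
    obtain ⟨s0, -, hs0⟩ := Finset.exists_max_image Finset.univ d Finset.univ_nonempty
    have hds0 : ∀ s', d s' ≤ d s0 := fun s' => hs0 s' (Finset.mem_univ s')
    have h2 : stepOp T π d s0 ≤ d s0 := stepOp_le_of_le hds0 s0
    have key : d s0 ≤ γ * d s0 := by
      calc d s0 = (expReward r π s0 + γ * stepOp T π (value T r γ π) s0) - f s0 := by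
            rw [hd]; rw [← bellman T r hγ0 hγ1 π s0]
        _ ≤ (expReward r π s0 + γ * stepOp T π (value T r γ π) s0)
            - (expReward r π s0 + γ * stepOp T π f s0) := by linarith [hf s0]
        _ = γ * (stepOp T π (value T r γ π) s0 - stepOp T π f s0) := by ring
        _ = γ * stepOp T π d s0 := by rw [← stepOp_sub]
        _ ≤ γ * d s0 := mul_le_mul_of_nonneg_left h2 hγ0
    have hd0 : d s0 ≤ 0 := by nlinarith
    intro s
    have := hds0 s
    simp only [hd] at this hd0 ⊢
    linarith

lemma le_value_of_le_step (T : S → (∀ i, A i) → PMF S) (r : S → (∀ i, A i) → ℝ) {γ : ℝ}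
    (hγ0 : 0 ≤ γ) (hγ1 : γ < 1) (π : ∀ i, S → PMF (A i)) (f : S → ℝ)
    (hf : ∀ s, f s ≤ expReward r π s + γ * stepOp T π f s) :
    ∀ s, f s ≤ value T r γ π s := by
  cases isEmpty_or_nonempty S with
  | inl h => intro s; exact isEmptyElim s
  | inr h =>
    set d := fun s => f s - value T r γ π s with hd
    obtain ⟨s0, -, hs0⟩ := Finset.exists_max_image Finset.univ d Finset.univ_nonempty
    have hds0 : ∀ s', d s' ≤ d s0 := fun s' => hs0 s' (Finset.mem_univ s')
    have h2 : stepOp T π d s0 ≤ d s0 := stepOp_le_of_le hds0 s0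
    have key : d s0 ≤ γ * d s0 := by
      calc d s0 ≤ (expReward r π s0 + γ * stepOp T π f s0) - value T r γ π s0 := by
            have := hf s0; simp only [hd]; linarith
        _ = (expReward r π s0 + γ * stepOp T π f s0)
            - (expReward r π s0 + γ * stepOp T π (value T r γ π) s0) := by
            rw [← bellman T r hγ0 hγ1 π s0]
        _ = γ * (stepOp T π f s0 - stepOp T π (value T r γ π) s0) := by ring
        _ = γ * stepOp T π d s0 := by rw [← stepOp_sub]
        _ ≤ γ * d s0 := mul_le_mul_of_nonneg_left h2 hγ0
    have hd0 : d s0 ≤ 0 := by nlinarith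
    intro s
    have := hds0 s
    simp only [hd] at this hd0 ⊢
    linarith

lemma jointExp_congr {π ρ : ∀ i, S → PMF (A i)} {s : S} (h : ∀ j, π j s = ρ j s)
    (g : (∀ i, A i) → ℝ) : jointExp π s g = jointExp ρ s g := by
  unfold jointExp
  exact Finset.sum_congr rfl fun a _ => by
    congr 1
    exact Finset.prod_congr rfl fun j _ => by rw [h j]

lemma deviation_sum_eq (T : S → (∀ i, A i) → PMF S) (r : S → (∀ i, A i) → ℝ) (γ : ℝ)
    (f : S → ℝ) {π ρ : ∀ j, S → PMF (A j)} {s : S} (h : ∀ j, π j s = ρ j s) :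
    (∑ a : ∀ j, A j, (∏ j, ((π j s) (a j)).toReal) *
      (r s a + γ * ∑ s' : S, ((T s a) s').toReal * f s'))
    = expReward r ρ s + γ * stepOp T ρ f s := by
  have h1 : (∑ a : ∀ j, A j, (∏ j, ((π j s) (a j)).toReal) *
      (r s a + γ * ∑ s' : S, ((T s a) s').toReal * f s'))
      = jointExp ρ s (fun a => r s a + γ * ∑ s' : S, ((T s a) s').toReal * f s') :=
    jointExp_congr h _
  rw [h1]
  exact jointExp_add_mul ρ s _ _ γ

/-- **One-shot deviation principle for stationary equilibria**: a joint stationary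
policy `π` is a stationary mixed-strategy Nash equilibrium iff for every state
`s`, agent `i`, and distribution `σ` over agent `i`'s actions, the one-step
deviation payoff `E_{aᵢ∼σ, a₋ᵢ∼π₋ᵢ(s)}[rᵢ(s,a) + γ ∑_{s'} T(s,a)(s') V^i(π; s')]`
does not exceed `V^i(π; s)` (the expectation is written as the joint expectation
in which agent `i`'s policy at `s` is replaced by `σ`). -/
theorem one_shot_deviation_principle
    (T : S → (∀ i, A i) → PMF S) (r : Fin N → S → (∀ i, A i) → ℝ)
    (γ : ℝ) (hγ0 : 0 < γ) (hγ1 : γ < 1)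
    (π : ∀ j, S → PMF (A j)) :
    (∀ (s : S) (i : Fin N) (π'i : S → PMF (A i)),
        value T (r i) γ (Function.update π i π'i) s ≤ value T (r i) γ π s) ↔
    (∀ (s : S) (i : Fin N) (σ : PMF (A i)),
        ∑ a : ∀ j, A j,
          (∏ j, (((Function.update π i (fun _ => σ)) j s) (a j)).toReal) *
            (r i s a + γ * ∑ s' : S, ((T s a) s').toReal * value T (r i) γ π s')
          ≤ value T (r i) γ π s) := by
  classical
  constructor
  · -- Nash ⇒ one-shot
    intro hNash s i σ
    set f := value T (r i) γ π with hf
    set π'i : S → PMF (A i) := fun s' => if s' = s then σ else π i s' with hπ'i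
    set ρ := Function.update π i π'i with hρ
    have hw : ∀ j, (Function.update π i (fun _ => σ)) j s = ρ j s := by
      intro j
      rcases eq_or_ne j i with rfl | hj
      · simp [hρ, hπ'i]
      · simp [hρ, Function.update_of_ne hj]
    rw [deviation_sum_eq T (r i) γ f hw]
    by_contra hlt
    push_neg at hlt
    have hfb : ∀ s', f s' ≤ expReward (r i) ρ s' + γ * stepOp T ρ f s' := by
      intro s'
      rcases eq_or_ne s' s with rfl | hs'
      · exact hlt.le
      · have hw' : ∀ j, ρ j s' = π j s' := by
          intro j
          rcases eq_or_ne j i with rfl | hj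
          · simp [hρ, hπ'i, hs']
          · simp [hρ, Function.update_of_ne hj]
        have e1 : expReward (r i) ρ s' = expReward (r i) π s' := jointExp_congr hw' _
        have e2 : stepOp T ρ f s' = stepOp T π f s' := jointExp_congr hw' _
        rw [e1, e2, hf]
        exact le_of_eq (bellman T (r i) hγ0.le hγ1 π s')
    have h1 : ∀ s', f s' ≤ value T (r i) γ ρ s' :=
      le_value_of_le_step T (r i) hγ0.le hγ1 ρ f hfb
    have h2 : ∀ s', value T (r i) γ ρ s' ≤ f s' := fun s' => hNash s' i π'i
    have hVf : value T (r i) γ ρ = f := funext fun s' => le_antisymm (h2 s') (h1 s')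
    have hb := bellman T (r i) hγ0.le hγ1 ρ s
    rw [hVf] at hb
    linarith
  · -- one-shot ⇒ Nash
    intro hOS s i π'i
    set ρ := Function.update π i π'i with hρ
    refine value_le_of_step_le T (r i) hγ0.le hγ1 ρ (value T (r i) γ π) ?_ s
    intro s'
    have h := hOS s' i (π'i s')
    have hw : ∀ j, (Function.update π i (fun _ => π'i s')) j s' = ρ j s' := by
      intro j
      rcases eq_or_ne j i with rfl | hj
      · simp [hρ]
      · simp [hρ, Function.update_of_ne hj]
    rw [deviation_sum_eq T (r i) γ (value T (r i) γ π) hw] at h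
    exact h
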